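/- arXiv:2002.02260 — 4 statements merged into one kernel-verified Lean document; each statement's English description precedes it below -/
import Mathlib

section
/- Let $H_1, H_2$ be complex Hilbert spaces and $T$ a linear, closed, densely defined operator from $H_1$ to $H_2$. Let $F$ be a closed subspace of $H_2$ with $R_T \subset F$, and suppose $\|g\|_{H_2} \le C\|T^*g\|_{H_1}$ for all $g \in D_{T^*}\cap F$ for some $C>0$. Then for every $f \in F$ there exists a unique $u \in D_T \cap N_T^{\perp}$ such that $Tu = f$, and moreover $\|u\|_{H_1} \le C\|f\|_{H_2}$. -/
/-!
For `f ∈ F`, the bound `‖⟪f, g⟫‖ ≤ C ‖f‖ ‖T* g‖` holds for every `g ∈ D(T*)`, not only for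
`g ∈ F`: projecting `g` onto `F` changes neither `⟪f, g⟫` (as `f ∈ F`) nor `T* g`
(as `Fᗮ ⊥ R_T`). Hence `T* g ↦ ⟪f, g⟫` is a well-defined functional of norm at most `C ‖f‖`
on `R_{T*}`; Hahn–Banach and Riesz represent it by some `u` in the closure of `R_{T*}` with
`‖u‖ ≤ C ‖f‖`. Since `T` is closed, `T = T**`, so `⟪u, T* g⟫ = ⟪f, g⟫` for all `g` means
`T u = f`. Finally `R_{T*} ⊥ N_T`, and `T` is injective on `N_Tᗮ`.
-/

open scoped InnerProductSpace LinearPMap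

namespace LinearMap

variable {𝕜 V H : Type*} [RCLike 𝕜] [AddCommGroup V] [Module 𝕜 V]
  [NormedAddCommGroup H] [InnerProductSpace 𝕜 H]

theorem exists_strongDual_range_apply_eq_of_norm_le (A : V →ₗ[𝕜] H) (φ : V →ₗ[𝕜] 𝕜)
    {M : ℝ} (hM : 0 ≤ M) (hφ : ∀ v, ‖φ v‖ ≤ M * ‖A v‖) :
    ∃ Φ : StrongDual 𝕜 A.range, ‖Φ‖ ≤ M ∧
      ∀ v, Φ ⟨A v, A.mem_range_self v⟩ = φ v := by
  have hker : A.ker ≤ φ.ker := fun v hv => by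
    simpa [mem_ker.mp hv] using hφ v
  let Φ₀ : A.range →ₗ[𝕜] 𝕜 := A.ker.liftQ φ hker ∘ₗ A.quotKerEquivRange.symm
  have hΦ₀ : ∀ v, Φ₀ ⟨A v, A.mem_range_self v⟩ = φ v := fun v => by
    simp [Φ₀, quotKerEquivRange_symm_apply_image]
  have hbound : ∀ w, ‖Φ₀ w‖ ≤ M * ‖w‖ := by
    rintro ⟨_, v, rfl⟩
    exact (hΦ₀ v).symm ▸ hφ v
  exact ⟨Φ₀.mkContinuous M hbound, Φ₀.mkContinuous_norm_le hM hbound, hΦ₀⟩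

theorem exists_mem_closure_range_inner_apply_eq [CompleteSpace H] (A : V →ₗ[𝕜] H)
    (φ : V →ₗ[𝕜] 𝕜) {M : ℝ} (hM : 0 ≤ M) (hφ : ∀ v, ‖φ v‖ ≤ M * ‖A v‖) :
    ∃ u ∈ A.range.topologicalClosure, ‖u‖ ≤ M ∧ ∀ v, ⟪u, A v⟫_𝕜 = φ v := by
  obtain ⟨Φ, hΦM, hΦ⟩ := A.exists_strongDual_range_apply_eq_of_norm_le φ hM hφ
  obtain ⟨G, hGΦ, hGnorm⟩ := exists_extension_norm_eq A.range Φ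
  set K := A.range.topologicalClosure
  set w := (InnerProductSpace.toDual 𝕜 H).symm G
  refine ⟨K.starProjection w, K.starProjection_apply_mem w, ?_, fun v => ?_⟩
  · calc ‖K.starProjection w‖ ≤ ‖w‖ := K.norm_starProjection_apply_le w
      _ = ‖Φ‖ := by rw [LinearIsometryEquiv.norm_map, hGnorm]
      _ ≤ M := hΦM
  · have hAv : A v ∈ K := A.range.le_topologicalClosure (A.mem_range_self v)
    rw [K.inner_starProjection_left_eq_right, K.starProjection_eq_self_iff.mpr hAv,
      InnerProductSpace.toDual_symm_apply, ← hΦ, ← hGΦ]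

end LinearMap

namespace LinearPMap

variable {𝕜 E F : Type*} [RCLike 𝕜] [NormedAddCommGroup E] [InnerProductSpace 𝕜 E]
  [NormedAddCommGroup F] [InnerProductSpace 𝕜 F] {T : E →ₗ.[𝕜] F}

theorem eq_of_apply_eq_of_mem_orthogonal_ker {x y : T.domain}
    (hx : (x : E) ∈ ((LinearMap.ker T.toFun).map T.domain.subtype)ᗮ)
    (hy : (y : E) ∈ ((LinearMap.ker T.toFun).map T.domain.subtype)ᗮ) (hxy : T x = T y) :
    x = y := by
  have hker : ((x - y : T.domain) : E) ∈ (LinearMap.ker T.toFun).map T.domain.subtype :=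
    ⟨x - y, show T (x - y) = 0 by rw [T.map_sub, hxy, sub_self], rfl⟩
  have hperp : ((x - y : T.domain) : E) ∈ ((LinearMap.ker T.toFun).map T.domain.subtype)ᗮ := by
    simpa using sub_mem hx hy
  exact sub_eq_zero.mp <| Subtype.ext <|
    Submodule.disjoint_def.mp (Submodule.orthogonal_disjoint _) _ hker hperp

variable [CompleteSpace E]

theorem exists_adjoint_apply_eq_of_inner_apply_eq (hT : Dense (T.domain : Set E))
    (g : T†.domain) {g' : F} (h : ∀ x : T.domain, ⟪g', T x⟫_𝕜 = ⟪(g : F), T x⟫_𝕜) :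
    ∃ hg' : g' ∈ T†.domain, T† ⟨g', hg'⟩ = T† g := by
  have hw : ∀ x : T.domain, ⟪T† g, x⟫_𝕜 = ⟪g', T x⟫_𝕜 := fun x => by
    rw [h, adjoint_isFormalAdjoint hT g x]
  exact ⟨mem_adjoint_domain_of_exists g' ⟨_, hw⟩, adjoint_apply_eq hT _ hw⟩

theorem norm_inner_le_of_adjoint_estimate (hT : Dense (T.domain : Set E))
    {K : Submodule 𝕜 F} [K.HasOrthogonalProjection] (hTK : ∀ x : T.domain, T x ∈ K) {C : ℝ}
    (hest : ∀ g : T†.domain, (g : F) ∈ K → ‖(g : F)‖ ≤ C * ‖T† g‖)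
    {f : F} (hf : f ∈ K) (g : T†.domain) :
    ‖⟪f, (g : F)⟫_𝕜‖ ≤ C * ‖f‖ * ‖T† g‖ := by
  obtain ⟨hg₁, hTg₁⟩ := exists_adjoint_apply_eq_of_inner_apply_eq hT g
    (g' := K.starProjection g) fun x => by
      rw [K.inner_starProjection_left_eq_right, K.starProjection_eq_self_iff.mpr (hTK x)]
  have hfg : ⟪f, (g : F)⟫_𝕜 = ⟪f, K.starProjection g⟫_𝕜 := by
    rw [← K.inner_starProjection_left_eq_right, K.starProjection_eq_self_iff.mpr hf]
  calc ‖⟪f, (g : F)⟫_𝕜‖ ≤ ‖f‖ * ‖K.starProjection (g : F)‖ := hfg ▸ norm_inner_le_norm _ _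
    _ ≤ ‖f‖ * (C * ‖T† g‖) := by
        gcongr
        simpa [hTg₁] using hest ⟨_, hg₁⟩ (K.starProjection_apply_mem g)
    _ = C * ‖f‖ * ‖T† g‖ := by ring

theorem range_adjoint_le_orthogonal_ker (hT : Dense (T.domain : Set E)) :
    LinearMap.range T†.toFun ≤ ((LinearMap.ker T.toFun).map T.domain.subtype)ᗮ := by
  rintro _ ⟨g, rfl⟩
  rw [Submodule.mem_orthogonal]
  rintro _ ⟨x, hx, rfl⟩
  have hTx : T x = 0 := hx
  rw [inner_eq_zero_symm]
  change ⟪T† g, (x : E)⟫_𝕜 = 0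
  rw [adjoint_isFormalAdjoint hT g x, hTx, inner_zero_right]

theorem mem_graph_of_inner_adjoint_eq [CompleteSpace F] (hT : Dense (T.domain : Set E))
    (hTc : T.IsClosed) {u : E} {f : F} (h : ∀ g : T†.domain, ⟪u, T† g⟫_𝕜 = ⟪f, (g : F)⟫_𝕜) :
    (u, f) ∈ T.graph := by
  let G : Submodule 𝕜 (WithLp 2 (E × F)) :=
    T.graph.comap (WithLp.linearEquiv 2 𝕜 (E × F)).toLinearMap
  have hG : _root_.IsClosed (G : Set (WithLp 2 (E × F))) :=
    hTc.preimage (WithLp.prod_continuous_ofLp 2 E F)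
  have : CompleteSpace G := hG.completeSpace_coe
  suffices WithLp.toLp 2 (u, f) ∈ Gᗮᗮ by rwa [G.orthogonal_orthogonal] at this
  rw [Submodule.mem_orthogonal']
  rintro ⟨a, b⟩ hab
  have hb : ∀ x : T.domain, ⟪-a, (x : E)⟫_𝕜 = ⟪b, T x⟫_𝕜 := fun x => by
    have hx := G.inner_left_of_mem_orthogonal (u := WithLp.toLp 2 ((x : E), T x))
      (T.mem_graph x) hab
    rw [WithLp.prod_inner_apply] at hx
    rw [inner_neg_left]
    linear_combination -hx
  have hb_dom : b ∈ T†.domain := mem_adjoint_domain_of_exists b ⟨-a, hb⟩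
  have hub := h ⟨b, hb_dom⟩
  rw [adjoint_apply_eq hT ⟨b, hb_dom⟩ hb, inner_neg_right] at hub
  rw [WithLp.prod_inner_apply]
  linear_combination -hub

end LinearPMap

theorem exists_unique_solution_of_adjoint_estimate
    {H₁ H₂ : Type*} [NormedAddCommGroup H₁] [InnerProductSpace ℂ H₁]
    [NormedAddCommGroup H₂] [InnerProductSpace ℂ H₂]
    [CompleteSpace H₁] [CompleteSpace H₂]
    (T : H₁ →ₗ.[ℂ] H₂)
    (hdense : Dense (T.domain : Set H₁))
    (hclosed : IsClosed (T.graph : Set (H₁ × H₂)))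
    (F : Submodule ℂ H₂) (hF : IsClosed (F : Set H₂))
    (hR : Set.range (fun x : T.domain => T x) ⊆ (F : Set H₂))
    (C : ℝ) (hC : 0 < C)
    (hest : ∀ g : T.adjoint.domain, (g : H₂) ∈ F → ‖(g : H₂)‖ ≤ C * ‖T.adjoint g‖)
    (f : H₂) (hf : f ∈ F) :
    ∃ u : H₁, ∃ hu : u ∈ T.domain,
      u ∈ ((LinearMap.ker T.toFun).map T.domain.subtype)ᗮ ∧
      T ⟨u, hu⟩ = f ∧ ‖u‖ ≤ C * ‖f‖ ∧
      ∀ (u' : H₁) (hu' : u' ∈ T.domain),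
        u' ∈ ((LinearMap.ker T.toFun).map T.domain.subtype)ᗮ → T ⟨u', hu'⟩ = f → u' = u := by
  have : CompleteSpace F := hF.completeSpace_coe
  have hbound := T.norm_inner_le_of_adjoint_estimate hdense (fun x => hR ⟨x, rfl⟩) hest hf
  obtain ⟨u, hu_closure, hu_norm, hu_inner⟩ :=
    T.adjoint.toFun.exists_mem_closure_range_inner_apply_eq
      (innerₛₗ ℂ f ∘ₗ T.adjoint.domain.subtype) (mul_nonneg hC.le (norm_nonneg f)) hbound
  obtain ⟨⟨u, hu⟩, rfl, hTu⟩ :=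
    (T.mem_graph_iff).mp (T.mem_graph_of_inner_adjoint_eq hdense hclosed hu_inner)
  have hu_perp : u ∈ ((LinearMap.ker T.toFun).map T.domain.subtype)ᗮ :=
    Submodule.topologicalClosure_minimal _ (T.range_adjoint_le_orthogonal_ker hdense)
      (Submodule.isClosed_orthogonal _) hu_closure
  refine ⟨u, hu, hu_perp, hTu, hu_norm, fun u' hu' hu'_perp hTu' => ?_⟩
  exact congrArg Subtype.val
    (T.eq_of_apply_eq_of_mem_orthogonal_ker hu'_perp hu_perp (hTu'.trans hTu.symm))
end

section
/- Let $H_1, H_2, H_3$ be complex Hilbert spaces, $T: H_1 \to H_2$ and $S: H_2 \to H_3$ linear, closed, densely defined operators with $R_T \subset N_S$. If there exists a constant $C > 0$ such that $\|g\|_{H_2}^2 \le C^2(\|T^*g\|_{H_1}^2 + \|Sg\|_{H_3}^2)$ for all $g \in D_{T^*} \cap D_S$, then $R_T = N_S$. -/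
/-!
Let `N = ker S`, a closed subspace containing `R_T`, and let `P` be the orthogonal projection
onto `N`. Since `Nᗮ ⊆ R_Tᗮ = ker T*`, the projection `P` preserves `D_{T*}` and `T* P = T*` there.
Applying the estimate to `P g ∈ D_{T*} ∩ N` gives `‖P g‖ ≤ |C| ‖T* g‖`, so for `f ∈ N` the
functional `T* g ↦ ⟪f, g⟫ = ⟪f, P g⟫` is well defined and bounded on `R_{T*}`. Extending it by
Hahn–Banach and representing it by Riesz yields `u` with `⟪T* g, u⟫ = ⟪g, f⟫` for all `g ∈ D_{T*}`, i.e.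
`(u, f) ∈ graph T** = graph T`, so `f ∈ R_T`.
-/

open scoped InnerProductSpace

namespace LinearMap

variable {R D M N : Type*} [Ring R] [AddCommGroup D] [Module R D] [AddCommGroup M] [Module R M]
  [AddCommGroup N] [Module R N]

theorem exists_comp_rangeRestrict_eq_of_ker_le (A : D →ₗ[R] M) (φ : D →ₗ[R] N)
    (h : ker A ≤ ker φ) : ∃ ψ : range A →ₗ[R] N, ψ ∘ₗ A.rangeRestrict = φ := by
  refine ⟨(ker A).liftQ φ h ∘ₗ A.quotKerEquivRange.symm.toLinearMap, LinearMap.ext fun d => ?_⟩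
  have hd : A.quotKerEquivRange.symm (A.rangeRestrict d) = Submodule.Quotient.mk d := by
    rw [LinearEquiv.symm_apply_eq]
    exact Subtype.ext (A.quotKerEquivRange_apply_mk d).symm
  simp [hd]

end LinearMap

theorem exists_strongDual_comp_eq_of_norm_le {𝕜 D E : Type*} [RCLike 𝕜] [AddCommGroup D]
    [Module 𝕜 D] [SeminormedAddCommGroup E] [NormedSpace 𝕜 E] (A : D →ₗ[𝕜] E) (φ : D →ₗ[𝕜] 𝕜)
    (M : ℝ) (hφ : ∀ d, ‖φ d‖ ≤ M * ‖A d‖) : ∃ Φ : StrongDual 𝕜 E, ∀ d, Φ (A d) = φ d := by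
  have hker : LinearMap.ker A ≤ LinearMap.ker φ := fun d hd => by
    have := hφ d
    rw [LinearMap.mem_ker.1 hd, norm_zero, mul_zero] at this
    exact norm_le_zero_iff.1 this
  obtain ⟨ψ, hψ⟩ := A.exists_comp_rangeRestrict_eq_of_ker_le φ hker
  have hψφ (d : D) : ψ (A.rangeRestrict d) = φ d := congr($hψ d)
  have hψM : ∀ v, ‖ψ v‖ ≤ M * ‖v‖ := by
    rintro ⟨_, d, rfl⟩
    exact (congrArg norm (hψφ d)).trans_le (hφ d)
  obtain ⟨Φ, hΦ, -⟩ := exists_extension_norm_eq _ (ψ.mkContinuous M hψM)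
  exact ⟨Φ, fun d => (hΦ (A.rangeRestrict d)).trans (hψφ d)⟩

namespace LinearPMap

section Kernel

variable {R E F : Type*} [Ring R] [AddCommGroup E] [Module R E] [AddCommGroup F] [Module R F]

def ker (S : E →ₗ.[R] F) : Submodule R E :=
  S.graph.comap (LinearMap.inl R E F)

theorem mem_ker_iff {S : E →ₗ.[R] F} {y : E} : y ∈ S.ker ↔ ∃ hy : y ∈ S.domain, S ⟨y, hy⟩ = 0 := by
  simp only [ker, Submodule.mem_comap, LinearMap.inl_apply, mem_graph_iff, Subtype.exists,
    exists_and_left, exists_eq_left]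

theorem exists_apply_eq_of_sub_mem_ker {S : E →ₗ.[R] F} {x y : E} (hx : x ∈ S.domain)
    (hxy : x - y ∈ S.ker) : ∃ hy : y ∈ S.domain, S ⟨y, hy⟩ = S ⟨x, hx⟩ := by
  obtain ⟨hxy, hS⟩ := mem_ker_iff.1 hxy
  have hy : y ∈ S.domain := by simpa using S.domain.sub_mem hx hxy
  refine ⟨hy, ?_⟩
  have hsplit : (⟨x, hx⟩ : S.domain) = ⟨y, hy⟩ + ⟨x - y, hxy⟩ := Subtype.ext (by simp)
  rw [hsplit, map_add, hS, add_zero]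

theorem isClosed_ker [TopologicalSpace E] [TopologicalSpace F] {S : E →ₗ.[R] F}
    (hS : _root_.IsClosed (S.graph : Set (E × F))) : _root_.IsClosed (S.ker : Set E) :=
  hS.preimage (continuous_id.prodMk continuous_const)

end Kernel

section Adjoint

variable {𝕜 E F : Type*} [RCLike 𝕜] [NormedAddCommGroup E] [InnerProductSpace 𝕜 E]
  [NormedAddCommGroup F] [InnerProductSpace 𝕜 F] [CompleteSpace E] {T : E →ₗ.[𝕜] F}

theorem mem_graph_adjoint_of_inner_add_inner_eq_zero (hT : Dense (T.domain : Set E)) {a : E}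
    {b : F} (h : ∀ x : T.domain, ⟪(x : E), a⟫_𝕜 + ⟪T x, b⟫_𝕜 = 0) : (b, -a) ∈ T†.graph := by
  rw [adjoint_graph_eq_graph_adjoint hT, Submodule.mem_adjoint_iff]
  rintro x y hxy
  obtain ⟨x, rfl, rfl⟩ := T.mem_graph_iff.1 hxy
  simpa [inner_neg_right, add_comm] using h x

theorem mem_graph_of_forall_inner_adjoint_eq [CompleteSpace F] (hT : Dense (T.domain : Set E))
    (hTc : _root_.IsClosed (T.graph : Set (E × F))) {u : E} {f : F}
    (h : ∀ g : T†.domain, ⟪T† g, u⟫_𝕜 = ⟪(g : F), f⟫_𝕜) : (u, f) ∈ T.graph := by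
  let G : Submodule 𝕜 (WithLp 2 (E × F)) :=
    T.graph.comap (WithLp.linearEquiv 2 𝕜 (E × F)).toLinearMap
  have : CompleteSpace G :=
    (hTc.preimage (WithLp.prodContinuousLinearEquiv 2 𝕜 E F).continuous).completeSpace_coe
  suffices WithLp.toLp 2 (u, f) ∈ Gᗮᗮ by simpa [G, G.orthogonal_orthogonal] using this
  refine (Submodule.mem_orthogonal _ _).2 ?_
  rintro ⟨a, b⟩ hv
  have hvT : (b, -a) ∈ T†.graph := by
    refine mem_graph_adjoint_of_inner_add_inner_eq_zero hT fun x => ?_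
    simpa [G, WithLp.prod_inner_apply] using hv (WithLp.toLp 2 (x, T x)) (by simp [G])
  obtain ⟨g, hg, hTg⟩ := T†.mem_graph_iff.1 hvT
  dsimp only at hg hTg
  rw [WithLp.prod_inner_apply, ← neg_neg a, ← hTg, ← hg, inner_neg_left, h g, neg_add_cancel]

theorem orthogonal_le_ker_adjoint (hT : Dense (T.domain : Set E)) {N : Submodule 𝕜 F}
    (hN : ∀ x : T.domain, T x ∈ N) : Nᗮ ≤ T†.ker := by
  intro y hy
  have hy0 : ∀ x : T.domain, ⟪(0 : E), x⟫_𝕜 = ⟪y, T x⟫_𝕜 := fun x => by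
    rw [inner_zero_left, (N.mem_orthogonal' y).1 hy _ (hN x)]
  exact mem_ker_iff.2 ⟨mem_adjoint_domain_of_exists y ⟨0, hy0⟩, adjoint_apply_eq hT _ hy0⟩

theorem norm_starProjection_le (hT : Dense (T.domain : Set E)) {N : Submodule 𝕜 F}
    [N.HasOrthogonalProjection] (hN : ∀ x : T.domain, T x ∈ N) {M : ℝ}
    (hM : ∀ g : T†.domain, (g : F) ∈ N → ‖(g : F)‖ ≤ M * ‖T† g‖) (g : T†.domain) :
    ‖N.starProjection g‖ ≤ M * ‖T† g‖ := by
  obtain ⟨hPg, hTPg⟩ := exists_apply_eq_of_sub_mem_ker g.2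
    (orthogonal_le_ker_adjoint hT hN (N.sub_starProjection_mem_orthogonal g))
  simpa [hTPg] using hM ⟨_, hPg⟩ (N.starProjection_apply_mem g)

theorem exists_inner_adjoint_eq_inner (hT : Dense (T.domain : Set E)) {N : Submodule 𝕜 F}
    [N.HasOrthogonalProjection] (hN : ∀ x : T.domain, T x ∈ N) {M : ℝ}
    (hM : ∀ g : T†.domain, (g : F) ∈ N → ‖(g : F)‖ ≤ M * ‖T† g‖) {f : F} (hf : f ∈ N) :
    ∃ u : E, ∀ g : T†.domain, ⟪T† g, u⟫_𝕜 = ⟪(g : F), f⟫_𝕜 := by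
  have hbound (g : T†.domain) : ‖⟪f, (g : F)⟫_𝕜‖ ≤ ‖f‖ * M * ‖T† g‖ :=
    calc ‖⟪f, (g : F)⟫_𝕜‖ = ‖⟪f, N.starProjection g⟫_𝕜‖ := by
          rw [← N.inner_starProjection_left_eq_right, N.starProjection_eq_self_iff.2 hf]
      _ ≤ ‖f‖ * ‖N.starProjection g‖ := norm_inner_le_norm _ _
      _ ≤ ‖f‖ * M * ‖T† g‖ := by
          rw [mul_assoc]
          exact mul_le_mul_of_nonneg_left (norm_starProjection_le hT hN hM g) (norm_nonneg f)
  obtain ⟨Φ, hΦ⟩ := exists_strongDual_comp_eq_of_norm_le T†.toFun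
    ((innerₛₗ 𝕜 f).comp T†.domain.subtype) _ hbound
  refine ⟨(InnerProductSpace.toDual 𝕜 E).symm Φ, fun g => ?_⟩
  rw [← inner_conj_symm, InnerProductSpace.toDual_symm_apply, ← inner_conj_symm]
  exact congrArg _ (hΦ g)

end Adjoint

end LinearPMap

theorem range_eq_ker_of_joint_estimate_general
    {H₁ H₂ H₃ : Type*} [NormedAddCommGroup H₁] [InnerProductSpace ℂ H₁]
    [NormedAddCommGroup H₂] [InnerProductSpace ℂ H₂]
    [NormedAddCommGroup H₃] [InnerProductSpace ℂ H₃]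
    [CompleteSpace H₁] [CompleteSpace H₂]
    (T : H₁ →ₗ.[ℂ] H₂) (S : H₂ →ₗ.[ℂ] H₃)
    (hTdense : Dense (T.domain : Set H₁))
    (hTclosed : IsClosed (T.graph : Set (H₁ × H₂)))
    (hSclosed : IsClosed (S.graph : Set (H₂ × H₃)))
    (hRN : Set.range (fun x : T.domain => T x) ⊆ {y : H₂ | ∃ hy : y ∈ S.domain, S ⟨y, hy⟩ = 0})
    (C : ℝ)
    (hest : ∀ (g : H₂) (hg₁ : g ∈ T.adjoint.domain) (hg₂ : g ∈ S.domain),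
      ‖g‖ ^ 2 ≤ C ^ 2 * (‖T.adjoint ⟨g, hg₁⟩‖ ^ 2 + ‖S ⟨g, hg₂⟩‖ ^ 2)) :
    Set.range (fun x : T.domain => T x) = {y : H₂ | ∃ hy : y ∈ S.domain, S ⟨y, hy⟩ = 0} := by
  have hker : {y : H₂ | ∃ hy : y ∈ S.domain, S ⟨y, hy⟩ = 0} = S.ker :=
    Set.ext fun _ => LinearPMap.mem_ker_iff.symm
  rw [hker] at hRN ⊢
  have : CompleteSpace S.ker := (LinearPMap.isClosed_ker hSclosed).completeSpace_coe
  have hestN (g : T.adjoint.domain) (hg : (g : H₂) ∈ S.ker) :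
      ‖(g : H₂)‖ ≤ |C| * ‖T.adjoint g‖ := by
    obtain ⟨hgS, hSg⟩ := LinearPMap.mem_ker_iff.1 hg
    have hsq := hest g g.2 hgS
    rw [hSg, norm_zero, zero_pow two_ne_zero, add_zero, ← sq_abs C, ← mul_pow] at hsq
    exact (pow_le_pow_iff_left₀ (norm_nonneg _) (by positivity) two_ne_zero).1 hsq
  refine hRN.antisymm fun f hf => ?_
  obtain ⟨u, hu⟩ := T.exists_inner_adjoint_eq_inner hTdense (fun x => hRN ⟨x, rfl⟩) hestN hf
  have hgraph := T.mem_graph_of_forall_inner_adjoint_eq hTdense hTclosed hu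
  obtain ⟨x, rfl, hx⟩ := T.mem_graph_iff.1 hgraph
  exact ⟨x, hx⟩

theorem range_eq_ker_of_joint_estimate
    {H₁ H₂ H₃ : Type*} [NormedAddCommGroup H₁] [InnerProductSpace ℂ H₁]
    [NormedAddCommGroup H₂] [InnerProductSpace ℂ H₂]
    [NormedAddCommGroup H₃] [InnerProductSpace ℂ H₃]
    [CompleteSpace H₁] [CompleteSpace H₂] [CompleteSpace H₃]
    (T : H₁ →ₗ.[ℂ] H₂) (S : H₂ →ₗ.[ℂ] H₃)
    (hTdense : Dense (T.domain : Set H₁)) (hSdense : Dense (S.domain : Set H₂))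
    (hTclosed : IsClosed (T.graph : Set (H₁ × H₂)))
    (hSclosed : IsClosed (S.graph : Set (H₂ × H₃)))
    (hRN : Set.range (fun x : T.domain => T x) ⊆ {y : H₂ | ∃ hy : y ∈ S.domain, S ⟨y, hy⟩ = 0})
    (C : ℝ) (hC : 0 < C)
    (hest : ∀ (g : H₂) (hg₁ : g ∈ T.adjoint.domain) (hg₂ : g ∈ S.domain),
      ‖g‖ ^ 2 ≤ C ^ 2 * (‖T.adjoint ⟨g, hg₁⟩‖ ^ 2 + ‖S ⟨g, hg₂⟩‖ ^ 2)) :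
    Set.range (fun x : T.domain => T x) = {y : H₂ | ∃ hy : y ∈ S.domain, S ⟨y, hy⟩ = 0} :=
  range_eq_ker_of_joint_estimate_general T S hTdense hTclosed hSclosed hRN C hest
end

section
/- With $\mathcal{N}$ the infinite product of planar Gaussians with standard deviations $a_i$ satisfying $\sum_i a_i < 1$, the set $\ell^{\infty}$ of bounded complex sequences satisfies $\mathcal{N}(\ell^{\infty}) = 1$. -/
open MeasureTheory ProbabilityTheory

/-- The centered Gaussian measure on `ℂ ≅ ℝ²` with standard deviation `a` in each
real coordinate. -/
noncomputable def planarGaussian (a : ℝ) : Measure ℂ :=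
  ((gaussianReal 0 (a ^ 2).toNNReal).prod (gaussianReal 0 (a ^ 2).toNNReal)).map
    (fun q : ℝ × ℝ => Complex.equivRealProd.symm q)

open Set Filter
open scoped ENNReal NNReal

/-! By Chebyshev, the `n`-th coordinate leaves the square `[-1, 1]²` with probability at most
`2 aₙ²`, and `∑ aₙ² < ∞` because `∑ aₙ < ∞`. By the first Borel–Cantelli lemma, almost surely only
finitely many coordinates leave the square, so the sequence is bounded. -/

lemma Summable.sq_of_nonneg {ι : Type*} {a : ι → ℝ} (ha : ∀ i, 0 ≤ a i) (hs : Summable a) :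
    Summable fun i => a i ^ 2 :=
  Summable.of_nonneg_of_le (fun i => sq_nonneg (a i))
    (fun i => by
      rw [sq]
      exact mul_le_mul_of_nonneg_right (hs.le_tsum i fun j _ => ha j) (ha i))
    (hs.mul_left (∑' i, a i))

lemma ae_bddAbove_range_of_tsum_measure_lt_ne_top {Ω : Type*} [MeasurableSpace Ω]
    {μ : Measure Ω} {f : ℕ → Ω → ℝ} {c : ℝ} (h : ∑' n, μ {ω | c < f n ω} ≠ ∞) :
    ∀ᵐ ω ∂μ, BddAbove (range fun n => f n ω) := by
  filter_upwards [ae_eventually_notMem h] with ω hω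
  exact (isBoundedUnder_of_eventually_le (a := c) (hω.mono fun _ hn => not_lt.mp hn)).bddAbove_range

lemma gaussianReal_le_abs_le (v : ℝ≥0) {c : ℝ} (hc : 0 < c) :
    gaussianReal 0 v {x | c ≤ |x|} ≤ ENNReal.ofReal (v / c ^ 2) := by
  simpa [integral_id_gaussianReal, variance_id_gaussianReal] using
    meas_ge_le_variance_div_sq (memLp_id_gaussianReal (μ := 0) (v := v) 2) hc

lemma measurable_equivRealProd_symm : Measurable fun q : ℝ × ℝ => Complex.equivRealProd.symm q :=
  Complex.measurableEquivRealProd.symm.measurable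

lemma planarGaussian_map_re (a : ℝ) :
    (planarGaussian a).map Complex.re = gaussianReal 0 (a ^ 2).toNNReal := by
  have h : (Complex.re ∘ fun q : ℝ × ℝ => Complex.equivRealProd.symm q) = Prod.fst := by
    ext; simp
  rw [planarGaussian, Measure.map_map Complex.measurable_re measurable_equivRealProd_symm, h,
    Measure.map_fst_prod, measure_univ, one_smul]

lemma planarGaussian_map_im (a : ℝ) :
    (planarGaussian a).map Complex.im = gaussianReal 0 (a ^ 2).toNNReal := by
  have h : (Complex.im ∘ fun q : ℝ × ℝ => Complex.equivRealProd.symm q) = Prod.snd := by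
    ext; simp
  rw [planarGaussian, Measure.map_map Complex.measurable_im measurable_equivRealProd_symm, h,
    Measure.map_snd_prod, measure_univ, one_smul]

lemma planarGaussian_lt_max_abs_le (a : ℝ) {c : ℝ} (hc : 0 < c) :
    planarGaussian a {w | c < max |w.re| |w.im|} ≤ 2 * ENNReal.ofReal (a ^ 2 / c ^ 2) := by
  have hS : MeasurableSet {x : ℝ | c ≤ |x|} := measurableSet_le measurable_const measurable_abs
  have htail := gaussianReal_le_abs_le (a ^ 2).toNNReal hc
  rw [Real.coe_toNNReal _ (sq_nonneg a)] at htail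
  have hre := htail
  have him := htail
  rw [← planarGaussian_map_re, Measure.map_apply Complex.measurable_re hS] at hre
  rw [← planarGaussian_map_im, Measure.map_apply Complex.measurable_im hS] at him
  calc planarGaussian a {w | c < max |w.re| |w.im|}
      ≤ planarGaussian a (Complex.re ⁻¹' {x | c ≤ |x|} ∪ Complex.im ⁻¹' {x | c ≤ |x|}) :=
        measure_mono fun w (hw : c < max |w.re| |w.im|) => by
          rcases lt_max_iff.mp hw with h | h
          exacts [Or.inl h.le, Or.inr h.le]
    _ ≤ 2 * ENNReal.ofReal (a ^ 2 / c ^ 2) := by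
        rw [two_mul]
        exact (measure_union_le _ _).trans (add_le_add hre him)

theorem gaussian_product_measure_linfty_full_general
    (a : ℕ → ℝ) (ha : ∀ i, 0 < a i) (hsummable : Summable a)
    (N : Measure (ℕ → ℂ)) [IsProbabilityMeasure N]
    (hmarg : ∀ i, N.map (fun z : ℕ → ℂ => z i) = planarGaussian (a i)) :
    N {z : ℕ → ℂ | ∃ C : ℝ, ∀ n, max |(z n).re| |(z n).im| ≤ C} = 1 := by
  have htail : ∀ n, N {z | 1 < max |(z n).re| |(z n).im|} ≤ ENNReal.ofReal (2 * a n ^ 2) := by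
    intro n
    have hS : MeasurableSet {w : ℂ | 1 < max |w.re| |w.im|} :=
      measurableSet_lt measurable_const (by fun_prop)
    have h := planarGaussian_lt_max_abs_le (a n) one_pos
    rw [← hmarg n, Measure.map_apply (measurable_pi_apply n) hS] at h
    simpa only [preimage_ofPred_eq, one_pow, div_one, ENNReal.ofReal_mul zero_le_two,
      ENNReal.ofReal_ofNat] using h
  have hfinite : ∑' n, N {z | 1 < max |(z n).re| |(z n).im|} ≠ ∞ := by
    refine ne_top_of_le_ne_top ?_ (ENNReal.tsum_le_tsum htail)
    rw [← ENNReal.ofReal_tsum_of_nonneg (fun n => by positivity)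
      ((hsummable.sq_of_nonneg fun i => (ha i).le).mul_left 2)]
    exact ENNReal.ofReal_ne_top
  have hae : ∀ᵐ z ∂N, ∃ C : ℝ, ∀ n, max |(z n).re| |(z n).im| ≤ C :=
    (ae_bddAbove_range_of_tsum_measure_lt_ne_top hfinite).mono
      fun z ⟨C, hC⟩ => ⟨C, fun n => hC ⟨n, rfl⟩⟩
  exact (measure_congr (ae_eq_univ.mpr hae)).trans measure_univ

theorem gaussian_product_measure_linfty_full
    (a : ℕ → ℝ) (ha : ∀ i, 0 < a i) (hsummable : Summable a) (hsum : ∑' i, a i < 1)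
    (N : Measure (ℕ → ℂ)) [IsProbabilityMeasure N]
    (hindep : iIndepFun (fun i (z : ℕ → ℂ) => z i) N)
    (hmarg : ∀ i, N.map (fun z : ℕ → ℂ => z i) = planarGaussian (a i)) :
    N {z : ℕ → ℂ | ∃ C : ℝ, ∀ n, max |(z n).re| |(z n).im| ≤ C} = 1 :=
  gaussian_product_measure_linfty_full_general a ha hsummable N hmarg
end

section
/- Let $P$ be the Gaussian product probability measure on $\ell^p$ (restriction of $\mathcal{N}$ with $\sum_i a_i < 1$), $p \in [1,\infty)$. Then $\int_{\ell^p} e^{\|\mathbf{z}\|_{\ell^1}}\, dP(\mathbf{z}) \le e^{\sum_{k=1}^{\infty}\left(a_k^2 + \frac{2\sqrt{2}}{\sqrt{\pi}} a_k\right)} < \infty$. -/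
/-!
Tilting a centred Gaussian `X` of variance `a²` by `e^{±x}` shifts its mean to `±a²`, so
`E e^{|X|} = e^{a²/2} (P(X ≥ -a²) + P(X < a²)) = e^{a²/2} (1 + P(-a² ≤ X < a²))`.
Bounding the density by its maximum `1 / (|a| √(2π))` gives
`E e^{|X|} ≤ e^{a²/2} (1 + √(2/π) |a|) ≤ e^{a²/2 + √(2/π) |a|}`.
A planar Gaussian has two independent such real coordinates, and for independent coordinates the
exponential of the partial sums of `|Re zₙ| + |Im zₙ|` has the product of these bounds as
expectation; monotone convergence passes to the full series.
-/

open MeasureTheory ProbabilityTheory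

open Real Set
open scoped ENNReal NNReal

namespace ProbabilityTheory

lemma gaussianPDFReal_mul_exp_mul (v : ℝ≥0) (t x : ℝ) :
    gaussianPDFReal 0 v x * rexp (t * x) = rexp (v * t ^ 2 / 2) * gaussianPDFReal (v * t) v x := by
  rcases eq_or_ne v 0 with rfl | hv
  · simp [gaussianPDFReal_zero_var]
  simp only [gaussianPDFReal, sub_zero]
  rw [mul_assoc, ← Real.exp_add, mul_left_comm, ← Real.exp_add]
  congr 2
  have : (v : ℝ) ≠ 0 := by exact_mod_cast hv
  field_simp
  ring

lemma gaussianPDFReal_le_inv_sqrt (μ : ℝ) (v : ℝ≥0) (x : ℝ) :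
    gaussianPDFReal μ v x ≤ (√(2 * π * v))⁻¹ := by
  rw [gaussianPDFReal]
  refine mul_le_of_le_one_right (by positivity) (Real.exp_le_one_iff.mpr ?_)
  exact div_nonpos_of_nonpos_of_nonneg (neg_nonpos.mpr (sq_nonneg _)) (by positivity)

lemma setLIntegral_gaussianPDF_mul_exp_mul {v : ℝ≥0} (hv : v ≠ 0) (t : ℝ) (s : Set ℝ) :
    ∫⁻ x in s, gaussianPDF 0 v x * ENNReal.ofReal (rexp (t * x))
      = ENNReal.ofReal (rexp (v * t ^ 2 / 2)) * gaussianReal (v * t) v s := by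
  simp_rw [gaussianReal_apply _ hv, gaussianPDF,
    ← ENNReal.ofReal_mul (gaussianPDFReal_nonneg _ _ _), gaussianPDFReal_mul_exp_mul,
    ENNReal.ofReal_mul (Real.exp_pos _).le]
  exact lintegral_const_mul _ (measurable_gaussianPDFReal _ _).ennreal_ofReal

lemma gaussianReal_apply_le_mul_volume {v : ℝ≥0} (hv : v ≠ 0) (μ : ℝ) (s : Set ℝ) :
    gaussianReal μ v s ≤ ENNReal.ofReal (√(2 * π * v))⁻¹ * volume s := by
  rw [gaussianReal_apply _ hv, ← setLIntegral_const]
  exact lintegral_mono fun x => ENNReal.ofReal_le_ofReal (gaussianPDFReal_le_inv_sqrt μ v x)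

lemma measure_Ici_add_measure_Iio {μ : Measure ℝ} [IsProbabilityMeasure μ] {a b : ℝ}
    (hab : a ≤ b) : μ (Ici a) + μ (Iio b) = 1 + μ (Ico a b) := by
  rw [← Iio_union_Ico_eq_Iio hab,
    measure_union ((Iio_disjoint_Ici le_rfl).mono_right Ico_subset_Ici_self) measurableSet_Ico,
    ← add_assoc, ← compl_Ici, prob_add_prob_compl measurableSet_Ici]

lemma lintegral_exp_abs_gaussianReal (v : ℝ≥0) :
    ∫⁻ x, ENNReal.ofReal (rexp |x|) ∂gaussianReal 0 v
      = ENNReal.ofReal (rexp (v / 2)) * (1 + gaussianReal 0 v (Ico (-v) v)) := by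
  rcases eq_or_ne v 0 with rfl | hv
  · simp [gaussianReal_zero_var]
  have h_shift (m : ℝ) (s : Set ℝ) (hs : MeasurableSet s) :
      gaussianReal m v s = gaussianReal 0 v ((· + m) ⁻¹' s) := by
    rw [← Measure.map_apply (measurable_add_const m) hs, gaussianReal_map_add_const, zero_add]
  have h_pos : ∫⁻ x in Ici 0, gaussianPDF 0 v x * ENNReal.ofReal (rexp |x|)
      = ENNReal.ofReal (rexp (v / 2)) * gaussianReal 0 v (Ici (-v)) := by
    rw [setLIntegral_congr_fun (g := fun x => gaussianPDF 0 v x * ENNReal.ofReal (rexp (1 * x)))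
        measurableSet_Ici fun x (hx : 0 ≤ x) => by simp only [abs_of_nonneg hx, one_mul],
      setLIntegral_gaussianPDF_mul_exp_mul hv, h_shift _ _ measurableSet_Ici,
      preimage_add_const_Ici]
    simp
  have h_neg : ∫⁻ x in Iio 0, gaussianPDF 0 v x * ENNReal.ofReal (rexp |x|)
      = ENNReal.ofReal (rexp (v / 2)) * gaussianReal 0 v (Iio v) := by
    rw [setLIntegral_congr_fun (g := fun x => gaussianPDF 0 v x * ENNReal.ofReal (rexp (-1 * x)))
        measurableSet_Iio fun x (hx : x < 0) => by simp only [abs_of_neg hx, neg_one_mul],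
      setLIntegral_gaussianPDF_mul_exp_mul hv, h_shift _ _ measurableSet_Iio,
      preimage_add_const_Iio]
    simp
  calc ∫⁻ x, ENNReal.ofReal (rexp |x|) ∂gaussianReal 0 v
      = ∫⁻ x, gaussianPDF 0 v x * ENNReal.ofReal (rexp |x|) := by
        rw [gaussianReal_of_var_ne_zero _ hv, lintegral_withDensity_eq_lintegral_mul _
          (measurable_gaussianPDF _ _) (by fun_prop)]
        rfl
    _ = ENNReal.ofReal (rexp (v / 2))
          * (gaussianReal 0 v (Ici (-v)) + gaussianReal 0 v (Iio v)) := by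
        rw [← lintegral_add_compl _ measurableSet_Ici, compl_Ici, h_pos, h_neg, mul_add]
    _ = _ := by rw [measure_Ici_add_measure_Iio (neg_le_self v.coe_nonneg)]

lemma gaussianReal_Ico_neg_sq_sq_le (a : ℝ) :
    gaussianReal 0 (a ^ 2).toNNReal (Ico (-a ^ 2) (a ^ 2)) ≤ ENNReal.ofReal (√2 / √π * |a|) := by
  rcases eq_or_ne a 0 with rfl | ha
  · simp
  have hv : (a ^ 2).toNNReal ≠ 0 := by simpa using ha
  calc gaussianReal 0 (a ^ 2).toNNReal (Ico (-a ^ 2) (a ^ 2))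
      ≤ ENNReal.ofReal (√(2 * π * a ^ 2))⁻¹ * ENNReal.ofReal (2 * a ^ 2) := by
        simpa [Real.volume_Ico, Real.coe_toNNReal _ (sq_nonneg a), two_mul]
          using gaussianReal_apply_le_mul_volume hv 0 (Ico (-a ^ 2) (a ^ 2))
    _ = ENNReal.ofReal (√2 / √π * |a|) := by
        rw [← ENNReal.ofReal_mul (by positivity)]
        congr 1
        rw [Real.sqrt_mul (by positivity), Real.sqrt_mul zero_le_two, Real.sqrt_sq_eq_abs,
          ← sq_abs a]
        have h2 : √2 ^ 2 = 2 := Real.sq_sqrt zero_le_two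
        have : |a| ≠ 0 := abs_ne_zero.mpr ha
        field_simp
        rw [h2]

lemma lintegral_exp_abs_gaussianReal_le (a : ℝ) :
    ∫⁻ x, ENNReal.ofReal (rexp |x|) ∂gaussianReal 0 (a ^ 2).toNNReal
      ≤ ENNReal.ofReal (rexp (a ^ 2 / 2 + √2 / √π * |a|)) := by
  rw [lintegral_exp_abs_gaussianReal, Real.coe_toNNReal _ (sq_nonneg a), Real.exp_add,
    ENNReal.ofReal_mul (Real.exp_pos _).le]
  gcongr
  calc 1 + gaussianReal 0 (a ^ 2).toNNReal (Ico (-a ^ 2) (a ^ 2))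
      ≤ ENNReal.ofReal (1 + √2 / √π * |a|) := by
        rw [ENNReal.ofReal_add zero_le_one (by positivity), ENNReal.ofReal_one]
        gcongr
        exact gaussianReal_Ico_neg_sq_sq_le a
    _ ≤ ENNReal.ofReal (rexp (√2 / √π * |a|)) :=
        ENNReal.ofReal_le_ofReal (by linarith [Real.add_one_le_exp (√2 / √π * |a|)])

end ProbabilityTheory

lemma lintegral_exp_abs_re_add_abs_im_planarGaussian_le (a : ℝ) :
    ∫⁻ w, ENNReal.ofReal (rexp (|w.re| + |w.im|)) ∂planarGaussian a
      ≤ ENNReal.ofReal (rexp (a ^ 2 + 2 * √2 / √π * |a|)) := by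
  have h_eq : ∫⁻ w, ENNReal.ofReal (rexp (|w.re| + |w.im|)) ∂planarGaussian a
      = (∫⁻ x, ENNReal.ofReal (rexp |x|) ∂gaussianReal 0 (a ^ 2).toNNReal) ^ 2 := by
    have h_meas : Measurable fun q : ℝ × ℝ => Complex.equivRealProd.symm q :=
      Complex.measurableEquivRealProd.symm.measurable
    rw [pow_two, ← lintegral_prod_mul (by fun_prop) (by fun_prop), planarGaussian,
      lintegral_map (by fun_prop) h_meas]
    simp [Real.exp_add, ENNReal.ofReal_mul (Real.exp_pos _).le]
  calc ∫⁻ w, ENNReal.ofReal (rexp (|w.re| + |w.im|)) ∂planarGaussian a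
      ≤ ENNReal.ofReal (rexp (a ^ 2 / 2 + √2 / √π * |a|)) ^ 2 := by
        rw [h_eq]
        gcongr
        exact lintegral_exp_abs_gaussianReal_le a
    _ = ENNReal.ofReal (rexp (a ^ 2 + 2 * √2 / √π * |a|)) := by
        rw [← ENNReal.ofReal_pow (Real.exp_pos _).le, ← Real.exp_nat_mul]
        ring_nf

lemma Summable.sq {ι : Type*} {f : ι → ℝ} (hf : Summable f) : Summable fun i => f i ^ 2 := by
  refine hf.abs.of_norm_bounded_eventually ?_
  filter_upwards [hf.abs.tendsto_cofinite_zero.eventually (ge_mem_nhds one_pos)] with i hi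
  rw [norm_pow, Real.norm_eq_abs, pow_two]
  exact mul_le_of_le_one_left (abs_nonneg _) hi

lemma ENNReal.ofReal_exp_tsum_le_iSup (f : ℕ → ℝ) :
    ENNReal.ofReal (rexp (∑' n, f n)) ≤ ⨆ m, ENNReal.ofReal (rexp (∑ n ∈ Finset.range m, f n)) := by
  by_cases hf : Summable f
  · have h_lim := ((ENNReal.continuous_ofReal.comp Real.continuous_exp).tendsto _).comp
      hf.hasSum.tendsto_sum_nat
    exact le_of_tendsto' h_lim (le_iSup fun m => ENNReal.ofReal (rexp (∑ n ∈ Finset.range m, f n)))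
  · rw [tsum_eq_zero_of_not_summable hf]
    exact le_iSup_of_le 0 (by simp)

theorem ProbabilityTheory.iIndepFun.lintegral_exp_tsum_le {Ω : Type*} [MeasurableSpace Ω]
    {μ : Measure Ω} {X : ℕ → Ω → ℝ} (hX : iIndepFun X μ) (hXm : ∀ n, Measurable (X n))
    (hX0 : ∀ n ω, 0 ≤ X n ω) {c : ℕ → ℝ} (hc : Summable c) (hc0 : ∀ n, 0 ≤ c n)
    (hXc : ∀ n, ∫⁻ ω, ENNReal.ofReal (rexp (X n ω)) ∂μ ≤ ENNReal.ofReal (rexp (c n))) :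
    ∫⁻ ω, ENNReal.ofReal (rexp (∑' n, X n ω)) ∂μ ≤ ENNReal.ofReal (rexp (∑' n, c n)) := by
  have h_prod (m : ℕ) (x : ℕ → ℝ) : ENNReal.ofReal (rexp (∑ n ∈ Finset.range m, x n))
      = ∏ n ∈ Finset.range m, ENNReal.ofReal (rexp (x n)) := by
    rw [Real.exp_sum, ENNReal.ofReal_prod_of_nonneg fun n _ => (Real.exp_pos _).le]
  have h_partial (m : ℕ) :
      ∫⁻ ω, ENNReal.ofReal (rexp (∑ n ∈ Finset.range m, X n ω)) ∂μ
        ≤ ENNReal.ofReal (rexp (∑' n, c n)) := calc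
    _ = ∏ n ∈ Finset.range m, ∫⁻ ω, ENNReal.ofReal (rexp (X n ω)) ∂μ := by
        simp_rw [h_prod m]
        exact lintegral_prod_eq_prod_lintegral_of_indepFun _ _
          (hX.comp _ fun _ => Real.measurable_exp.ennreal_ofReal) (fun n => by fun_prop)
    _ ≤ ∏ n ∈ Finset.range m, ENNReal.ofReal (rexp (c n)) :=
        Finset.prod_le_prod' fun n _ => hXc n
    _ ≤ ENNReal.ofReal (rexp (∑' n, c n)) := by
        rw [← h_prod]
        exact ENNReal.ofReal_le_ofReal (Real.exp_le_exp.mpr (hc.sum_le_tsum _ fun n _ => hc0 n))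
  have h_mono : Monotone fun m ω => ENNReal.ofReal (rexp (∑ n ∈ Finset.range m, X n ω)) :=
    fun m m' hm ω => ENNReal.ofReal_le_ofReal (Real.exp_le_exp.mpr
      (Finset.sum_le_sum_of_subset_of_nonneg (Finset.range_mono hm) fun n _ _ => hX0 n ω))
  calc ∫⁻ ω, ENNReal.ofReal (rexp (∑' n, X n ω)) ∂μ
      ≤ ∫⁻ ω, ⨆ m, ENNReal.ofReal (rexp (∑ n ∈ Finset.range m, X n ω)) ∂μ :=
        lintegral_mono fun ω => ENNReal.ofReal_exp_tsum_le_iSup _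
    _ = ⨆ m, ∫⁻ ω, ENNReal.ofReal (rexp (∑ n ∈ Finset.range m, X n ω)) ∂μ :=
        lintegral_iSup (fun m => by fun_prop) h_mono
    _ ≤ _ := iSup_le h_partial

theorem gaussian_product_lintegral_exp_l1_norm_general
    (a : ℕ → ℝ) (ha : ∀ i, 0 < a i) (hsummable : Summable a)
    (N : Measure (ℕ → ℂ))
    (hindep : iIndepFun (fun i (z : ℕ → ℂ) => z i) N)
    (hmarg : ∀ i, N.map (fun z : ℕ → ℂ => z i) = planarGaussian (a i)) :
    ∫⁻ z : ℕ → ℂ, ENNReal.ofReal (Real.exp (∑' n, (|(z n).re| + |(z n).im|))) ∂N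
      ≤ ENNReal.ofReal
          (Real.exp (∑' k, (a k ^ 2 + 2 * Real.sqrt 2 / Real.sqrt Real.pi * a k))) := by
  refine (hindep.comp (fun _ (w : ℂ) => |w.re| + |w.im|) fun _ => by fun_prop).lintegral_exp_tsum_le
    (fun n => by fun_prop) (fun n z => add_nonneg (abs_nonneg _) (abs_nonneg _))
    (hsummable.sq.add (hsummable.mul_left _))
    (fun k => add_nonneg (sq_nonneg _) (mul_nonneg (by positivity) (ha k).le)) fun n => ?_
  refine (lintegral_map (f := fun w : ℂ => ENNReal.ofReal (rexp (|w.re| + |w.im|))) (by fun_prop)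
    (measurable_pi_apply n)).symm.trans_le ?_
  rw [hmarg n]
  simpa [abs_of_pos (ha n)] using lintegral_exp_abs_re_add_abs_im_planarGaussian_le (a n)

theorem gaussian_product_lintegral_exp_l1_norm
    (a : ℕ → ℝ) (ha : ∀ i, 0 < a i) (hsummable : Summable a) (hsum : ∑' i, a i < 1)
    (N : Measure (ℕ → ℂ)) [IsProbabilityMeasure N]
    (hindep : iIndepFun (fun i (z : ℕ → ℂ) => z i) N)
    (hmarg : ∀ i, N.map (fun z : ℕ → ℂ => z i) = planarGaussian (a i)) :
    ∫⁻ z : ℕ → ℂ, ENNReal.ofReal (Real.exp (∑' n, (|(z n).re| + |(z n).im|))) ∂N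
      ≤ ENNReal.ofReal
          (Real.exp (∑' k, (a k ^ 2 + 2 * Real.sqrt 2 / Real.sqrt Real.pi * a k))) :=
  gaussian_product_lintegral_exp_l1_norm_general a ha hsummable N hindep hmarg
end
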